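/- Define K̄_{n,k} := Z[λ_1,...,λ_s, μ_1,...,μ_t]/I_0 where I_0 is generated by Q_r - C(n,r) for 1 ≤ r ≤ n, with Q_r = ∑_{p+q=r, 0≤p≤k, 0≤q≤n-k} λ_p μ_q, conventions λ_0 = μ_0 = 1, λ_p = λ_{k-p} for p > s, μ_q = μ_{n-k-q} for q > t. Then the map α_0 : K̄_{2s+2t+2, 2s+1} → K̄_{2s+2t+1, 2s+1} given by λ_p ↦ λ_p, μ_q ↦ μ_q + μ_{q-1} is a well-defined ring isomorphism, with inverse β_0 given by λ_p ↦ λ_p, μ_q ↦ ∑_{j=0}^{q} (-1)^{q-j} μ_j. -/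
import Mathlib


open MvPolynomial

/-- `λ_p` in `ℤ[λ_1,…,λ_s,μ_1,…,μ_t]`, with conventions `λ_0 = 1`, `λ_p = λ_{k-p}` for
`p > s`, and `λ_p = 0` for `p > k`. -/
noncomputable def lamG (s t k : ℕ) (p : ℕ) : MvPolynomial (Fin s ⊕ Fin t) ℤ :=
  if p ≤ k then
    if min p (k - p) = 0 then 1
    else if hs : min p (k - p) - 1 < s then X (Sum.inl ⟨min p (k - p) - 1, hs⟩) else 0
  else 0

/-- `μ_q`, with conventions `μ_0 = 1`, `μ_q = μ_{(n-k)-q}` for `q > t`, `μ_q = 0` for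
`q > n-k`. -/
noncomputable def muG (s t nk : ℕ) (q : ℕ) : MvPolynomial (Fin s ⊕ Fin t) ℤ :=
  if q ≤ nk then
    if min q (nk - q) = 0 then 1
    else if ht : min q (nk - q) - 1 < t then X (Sum.inr ⟨min q (nk - q) - 1, ht⟩) else 0
  else 0

/-- `Q_r = ∑_{p+q=r, 0≤p≤k, 0≤q≤n-k} λ_p μ_q`. -/
noncomputable def QG (s t n k : ℕ) (r : ℕ) : MvPolynomial (Fin s ⊕ Fin t) ℤ :=
  ∑ p ∈ Finset.range (r + 1), lamG s t k p * muG s t (n - k) (r - p)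

/-- The ideal `I₀` generated by `Q_r - C(n,r)`, `1 ≤ r ≤ n`. -/
noncomputable def KbarIdeal (s t n k : ℕ) : Ideal (MvPolynomial (Fin s ⊕ Fin t) ℤ) :=
  Ideal.span (Set.range fun r : Fin n =>
    QG s t n k ((r : ℕ) + 1) -
      (n.choose ((r : ℕ) + 1) : MvPolynomial (Fin s ⊕ Fin t) ℤ))

/-- `K̄_{n,k} = ℤ[λ_1,…,λ_s,μ_1,…,μ_t]/I₀`. -/
abbrev Kbar (s t n k : ℕ) := MvPolynomial (Fin s ⊕ Fin t) ℤ ⧸ KbarIdeal s t n k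

/-! ### Auxiliary lemmas -/

section Aux

variable (s t : ℕ)

lemma muG_zero (nk : ℕ) : muG s t nk 0 = 1 := by simp [muG]

lemma muG_of_gt {nk q : ℕ} (h : nk < q) : muG s t nk q = 0 := by
  simp [muG, not_le.2 h]

lemma muG_symm {nk q : ℕ} (h : q ≤ nk) : muG s t nk q = muG s t nk (nk - q) := by
  unfold muG
  rw [if_pos h, if_pos (Nat.sub_le _ _), Nat.sub_sub_self h, Nat.min_comm]

lemma muG_eq_X {nk q : ℕ} (h1 : 1 ≤ q) (h2 : 2 * q ≤ nk) (h3 : q - 1 < t) :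
    muG s t nk q = X (Sum.inr ⟨q - 1, h3⟩) := by
  have hmin : min q (nk - q) = q := by omega
  unfold muG
  rw [if_pos (by omega), hmin, if_neg (by omega), dif_pos h3]

lemma lamG_of_gt {k p : ℕ} (h : k < p) : lamG s t k p = 0 := by
  simp [lamG, not_le.2 h]

lemma lamG_zero' (k : ℕ) : lamG s t k 0 = 1 := by simp [lamG]

lemma QG_zero' (n k : ℕ) : QG s t n k 0 = 1 := by
  simp [QG, lamG_zero', muG_zero]

lemma QG_eq_zero {n k r : ℕ} (hk : k ≤ n) (h : n < r) : QG s t n k r = 0 := by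
  unfold QG
  apply Finset.sum_eq_zero
  intro p hp
  rw [Finset.mem_range] at hp
  rcases le_or_gt p k with h1 | h1
  · rw [muG_of_gt s t (by omega)]; ring
  · rw [lamG_of_gt s t h1]; ring

end Aux

lemma telesc' {A : Type*} [CommRing A] (g : ℕ → A) (Q : ℕ) :
    ∑ j ∈ Finset.range (Q + 1), (-1 : A) ^ (Q - j) * (g (j + 1) + g j)
      = g (Q + 1) + (-1) ^ Q * g 0 := by
  induction Q with
  | zero => simp
  | succ n ih =>
    rw [Finset.sum_range_succ]
    have h1 : ∀ j ∈ Finset.range (n + 1),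
        (-1 : A) ^ (n + 1 - j) * (g (j + 1) + g j)
          = (-1) * ((-1) ^ (n - j) * (g (j + 1) + g j)) := by
      intro j hj
      rw [Finset.mem_range] at hj
      rw [show n + 1 - j = (n - j) + 1 by omega, pow_succ]
      ring
    rw [Finset.sum_congr rfl h1, ← Finset.mul_sum, ih, Nat.sub_self, pow_succ]
    ring

lemma altsum_choose {A : Type*} [CommRing A] (n r : ℕ) :
    ∑ j ∈ Finset.range (r + 1), (-1 : A) ^ (r - j) * ((n + 1).choose j : A)
      = (n.choose r : A) := by
  induction r with
  | zero => simp
  | succ m ih =>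
    rw [Finset.sum_range_succ]
    have h1 : ∀ j ∈ Finset.range (m + 1),
        (-1 : A) ^ (m + 1 - j) * ((n + 1).choose j : A)
          = (-1) * ((-1) ^ (m - j) * ((n + 1).choose j : A)) := by
      intro j hj
      rw [Finset.mem_range] at hj
      rw [show m + 1 - j = (m - j) + 1 by omega, pow_succ]
      ring
    rw [Finset.sum_congr rfl h1, ← Finset.mul_sum, ih, Nat.sub_self,
      Nat.choose_succ_succ (n := n) (k := m)]
    push_cast
    ring

/-! ### The maps α and β on the polynomial ring -/

noncomputable def aF (s t : ℕ) : Fin s ⊕ Fin t → MvPolynomial (Fin s ⊕ Fin t) ℤ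
  | Sum.inl p => X (Sum.inl p)
  | Sum.inr q => muG s t (2 * t) ((q : ℕ) + 1) + muG s t (2 * t) (q : ℕ)

noncomputable def bF (s t : ℕ) : Fin s ⊕ Fin t → MvPolynomial (Fin s ⊕ Fin t) ℤ
  | Sum.inl p => X (Sum.inl p)
  | Sum.inr q => ∑ j ∈ Finset.range ((q : ℕ) + 2),
      (-1 : MvPolynomial (Fin s ⊕ Fin t) ℤ) ^ ((q : ℕ) + 1 - j) * muG s t (2 * t + 1) j

noncomputable def amap (s t : ℕ) :
    MvPolynomial (Fin s ⊕ Fin t) ℤ →ₐ[ℤ] MvPolynomial (Fin s ⊕ Fin t) ℤ := aeval (aF s t)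

noncomputable def bmap (s t : ℕ) :
    MvPolynomial (Fin s ⊕ Fin t) ℤ →ₐ[ℤ] MvPolynomial (Fin s ⊕ Fin t) ℤ := aeval (bF s t)

section Maps

variable (s t : ℕ)

lemma amap_lam (k p : ℕ) : amap s t (lamG s t k p) = lamG s t k p := by
  unfold lamG
  split_ifs <;> simp [amap, aF]

lemma amap_X_inr (q : Fin t) :
    amap s t (X (Sum.inr q)) = muG s t (2 * t) ((q : ℕ) + 1) + muG s t (2 * t) (q : ℕ) := by
  simp [amap, aF]

lemma bmap_X_inr (q : Fin t) :
    bmap s t (X (Sum.inr q)) = ∑ j ∈ Finset.range ((q : ℕ) + 2),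
      (-1 : MvPolynomial (Fin s ⊕ Fin t) ℤ) ^ ((q : ℕ) + 1 - j) * muG s t (2 * t + 1) j := by
  simp [bmap, bF]

lemma a_mu (q : ℕ) (hq : 1 ≤ q) :
    amap s t (muG s t (2 * t + 1) q)
      = muG s t (2 * t) q + muG s t (2 * t) (q - 1) := by
  rcases le_or_gt q t with h | h
  · rw [muG_eq_X s t hq (by omega) (by omega), amap_X_inr]
    simp only [Fin.val_mk]
    rw [show q - 1 + 1 = q by omega]
  rcases lt_or_ge q (2 * t + 1) with h2 | h2
  · rw [muG_symm s t (nk := 2 * t + 1) (q := q) (by omega),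
      muG_eq_X s t (by omega) (by omega) (by omega : 2 * t + 1 - q - 1 < t), amap_X_inr]
    simp only [Fin.val_mk]
    rw [muG_symm s t (nk := 2 * t) (q := q) (by omega),
      muG_symm s t (nk := 2 * t) (q := q - 1) (by omega),
      show 2 * t + 1 - q - 1 + 1 = 2 * t - (q - 1) by omega,
      show 2 * t + 1 - q - 1 = 2 * t - q by omega]
    ring
  rcases eq_or_lt_of_le h2 with h3 | h3
  · subst h3
    have e1 : muG s t (2 * t + 1) (2 * t + 1) = 1 := by
      unfold muG; rw [if_pos (by omega), if_pos (by omega)]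
    have e2 : muG s t (2 * t) (2 * t + 1 - 1) = 1 := by
      unfold muG; rw [if_pos (by omega), if_pos (by omega)]
    rw [e1, map_one, muG_of_gt s t (by omega), e2]; ring
  · rw [muG_of_gt s t (by omega), map_zero, muG_of_gt s t (by omega),
      muG_of_gt s t (by omega)]; ring

lemma b_mu2 (j : ℕ) (hj : j ≤ t) :
    bmap s t (muG s t (2 * t) j)
      = ∑ i ∈ Finset.range (j + 1),
          (-1 : MvPolynomial (Fin s ⊕ Fin t) ℤ) ^ (j - i) * muG s t (2 * t + 1) i := by
  rcases Nat.eq_zero_or_pos j with rfl | hj1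
  · simp [muG_zero]
  · rw [muG_eq_X s t hj1 (by omega) (by omega), bmap_X_inr]
    simp only [Fin.val_mk]
    rw [show j - 1 + 2 = j + 1 by omega, show j - 1 + 1 = j by omega]

lemma ba_inr (q : Fin t) : bmap s t (amap s t (X (Sum.inr q))) = X (Sum.inr q) := by
  have hq : (q : ℕ) < t := q.isLt
  rw [amap_X_inr, map_add, b_mu2 s t ((q : ℕ) + 1) (by omega), b_mu2 s t (q : ℕ) (by omega),
    Finset.sum_range_succ, Nat.sub_self, pow_zero, one_mul]
  have h1 : ∀ i ∈ Finset.range ((q : ℕ) + 1),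
      (-1 : MvPolynomial (Fin s ⊕ Fin t) ℤ) ^ ((q : ℕ) + 1 - i) * muG s t (2 * t + 1) i
        = -((-1) ^ ((q : ℕ) - i) * muG s t (2 * t + 1) i) := by
    intro i hi
    rw [Finset.mem_range] at hi
    rw [show (q : ℕ) + 1 - i = ((q : ℕ) - i) + 1 by omega, pow_succ]
    ring
  rw [Finset.sum_congr rfl h1, Finset.sum_neg_distrib]
  rw [muG_eq_X s t (q := (q : ℕ) + 1) (by omega) (by omega) (by omega)]
  simp

lemma ab_inr (q : Fin t) : amap s t (bmap s t (X (Sum.inr q))) = X (Sum.inr q) := by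
  have hq : (q : ℕ) < t := q.isLt
  rw [bmap_X_inr, map_sum]
  have h1 : ∀ j ∈ Finset.range ((q : ℕ) + 2),
      amap s t ((-1 : MvPolynomial (Fin s ⊕ Fin t) ℤ) ^ ((q : ℕ) + 1 - j)
          * muG s t (2 * t + 1) j)
        = (-1) ^ ((q : ℕ) + 1 - j) * amap s t (muG s t (2 * t + 1) j) := by
    intro j _
    rw [map_mul, map_pow, map_neg, map_one]
  rw [Finset.sum_congr rfl h1, Finset.sum_range_succ']
  have h2 : ∀ j ∈ Finset.range ((q : ℕ) + 1),
      (-1 : MvPolynomial (Fin s ⊕ Fin t) ℤ) ^ ((q : ℕ) + 1 - (j + 1))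
          * amap s t (muG s t (2 * t + 1) (j + 1))
        = (-1) ^ ((q : ℕ) - j) * (muG s t (2 * t) (j + 1) + muG s t (2 * t) j) := by
    intro j hj
    rw [Finset.mem_range] at hj
    rw [a_mu s t (j + 1) (by omega), show (q : ℕ) + 1 - (j + 1) = (q : ℕ) - j by omega,
      show j + 1 - 1 = j by omega]
  rw [Finset.sum_congr rfl h2, telesc', muG_zero, muG_zero, map_one,
    muG_eq_X s t (q := (q : ℕ) + 1) (by omega) (by omega) (by omega)]
  simp [pow_succ]

lemma ba (x : MvPolynomial (Fin s ⊕ Fin t) ℤ) : bmap s t (amap s t x) = x := by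
  have h : (bmap s t).comp (amap s t) = AlgHom.id ℤ _ := by
    apply MvPolynomial.algHom_ext
    rintro (p | q)
    · simp [amap, bmap, aF, bF]
    · simpa [AlgHom.comp_apply] using ba_inr s t q
  simpa using DFunLike.congr_fun h x

lemma ab (x : MvPolynomial (Fin s ⊕ Fin t) ℤ) : amap s t (bmap s t x) = x := by
  have h : (amap s t).comp (bmap s t) = AlgHom.id ℤ _ := by
    apply MvPolynomial.algHom_ext
    rintro (p | q)
    · simp [amap, bmap, aF, bF]
    · simpa [AlgHom.comp_apply] using ab_inr s t q
  simpa using DFunLike.congr_fun h x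

lemma a_QG (r : ℕ) (hr : 1 ≤ r) :
    amap s t (QG s t (2 * s + 2 * t + 2) (2 * s + 1) r)
      = QG s t (2 * s + 2 * t + 1) (2 * s + 1) r
        + QG s t (2 * s + 2 * t + 1) (2 * s + 1) (r - 1) := by
  obtain ⟨m, rfl⟩ : ∃ m, r = m + 1 := ⟨r - 1, by omega⟩
  unfold QG
  rw [show 2 * s + 2 * t + 2 - (2 * s + 1) = 2 * t + 1 by omega,
    show 2 * s + 2 * t + 1 - (2 * s + 1) = 2 * t by omega, map_sum]
  have h1 : ∀ p ∈ Finset.range (m + 1 + 1),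
      amap s t (lamG s t (2 * s + 1) p * muG s t (2 * t + 1) (m + 1 - p))
        = lamG s t (2 * s + 1) p * amap s t (muG s t (2 * t + 1) (m + 1 - p)) := by
    intro p _
    rw [map_mul, amap_lam]
  rw [Finset.sum_congr rfl h1, Finset.sum_range_succ]
  have h2 : ∀ p ∈ Finset.range (m + 1),
      lamG s t (2 * s + 1) p * amap s t (muG s t (2 * t + 1) (m + 1 - p))
        = lamG s t (2 * s + 1) p * muG s t (2 * t) (m + 1 - p)
          + lamG s t (2 * s + 1) p * muG s t (2 * t) (m + 1 - 1 - p) := by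
    intro p hp
    rw [Finset.mem_range] at hp
    rw [a_mu s t (m + 1 - p) (by omega), show m + 1 - p - 1 = m + 1 - 1 - p by omega]
    ring
  rw [Finset.sum_congr rfl h2, Finset.sum_add_distrib, Nat.sub_self, muG_zero, map_one,
    Finset.sum_range_succ (n := m + 1)
      (f := fun p => lamG s t (2 * s + 1) p * muG s t (2 * t) (m + 1 - p)),
    Nat.sub_self, muG_zero, show m + 1 - 1 = m from rfl]
  ring

lemma amap_T (r : ℕ) (hr : 1 ≤ r) :
    amap s t (∑ j ∈ Finset.range (r + 1),
        (-1 : MvPolynomial (Fin s ⊕ Fin t) ℤ) ^ (r - j)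
          * QG s t (2 * s + 2 * t + 2) (2 * s + 1) j)
      = QG s t (2 * s + 2 * t + 1) (2 * s + 1) r := by
  obtain ⟨m, rfl⟩ : ∃ m, r = m + 1 := ⟨r - 1, by omega⟩
  rw [map_sum]
  have h1 : ∀ j ∈ Finset.range (m + 1 + 1),
      amap s t ((-1 : MvPolynomial (Fin s ⊕ Fin t) ℤ) ^ (m + 1 - j)
          * QG s t (2 * s + 2 * t + 2) (2 * s + 1) j)
        = (-1) ^ (m + 1 - j) * amap s t (QG s t (2 * s + 2 * t + 2) (2 * s + 1) j) := by
    intro j _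
    rw [map_mul, map_pow, map_neg, map_one]
  rw [Finset.sum_congr rfl h1, Finset.sum_range_succ']
  have h2 : ∀ j ∈ Finset.range (m + 1),
      (-1 : MvPolynomial (Fin s ⊕ Fin t) ℤ) ^ (m + 1 - (j + 1))
          * amap s t (QG s t (2 * s + 2 * t + 2) (2 * s + 1) (j + 1))
        = (-1) ^ (m - j) * (QG s t (2 * s + 2 * t + 1) (2 * s + 1) (j + 1)
            + QG s t (2 * s + 2 * t + 1) (2 * s + 1) j) := by
    intro j hj
    rw [Finset.mem_range] at hj
    rw [a_QG s t (j + 1) (by omega), show m + 1 - (j + 1) = m - j by omega,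
      show j + 1 - 1 = j from rfl]
  rw [Finset.sum_congr rfl h2, telesc', QG_zero', QG_zero', map_one, Nat.sub_zero, pow_succ]
  ring

lemma b_QG (r : ℕ) (hr : 1 ≤ r) :
    bmap s t (QG s t (2 * s + 2 * t + 1) (2 * s + 1) r)
      = ∑ j ∈ Finset.range (r + 1),
          (-1 : MvPolynomial (Fin s ⊕ Fin t) ℤ) ^ (r - j)
            * QG s t (2 * s + 2 * t + 2) (2 * s + 1) j := by
  rw [← amap_T s t r hr, ba]

/-! ### Ideal membership -/

lemma genmem (n k : ℕ) (hk : k ≤ n) (r : ℕ) :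
    QG s t n k r - (n.choose r : MvPolynomial (Fin s ⊕ Fin t) ℤ) ∈ KbarIdeal s t n k := by
  rcases Nat.eq_zero_or_pos r with rfl | hr
  · rw [QG_zero', Nat.choose_zero_right]
    simp
  rcases le_or_gt r n with h | h
  · have hlt : r - 1 < n := by omega
    have hmem := Ideal.subset_span (Set.mem_range_self (f := fun i : Fin n =>
      QG s t n k ((i : ℕ) + 1)
        - (n.choose ((i : ℕ) + 1) : MvPolynomial (Fin s ⊕ Fin t) ℤ)) ⟨r - 1, hlt⟩)
    rw [KbarIdeal]
    simpa [show r - 1 + 1 = r by omega] using hmem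
  · rw [QG_eq_zero s t hk h, Nat.choose_eq_zero_of_lt h]
    simp

lemma amap_gen (r : ℕ) (hr : 1 ≤ r) :
    amap s t (QG s t (2 * s + 2 * t + 2) (2 * s + 1) r
        - ((2 * s + 2 * t + 2).choose r : MvPolynomial (Fin s ⊕ Fin t) ℤ))
      ∈ KbarIdeal s t (2 * s + 2 * t + 1) (2 * s + 1) := by
  obtain ⟨m, rfl⟩ : ∃ m, r = m + 1 := ⟨r - 1, by omega⟩
  rw [map_sub, a_QG s t (m + 1) (by omega), map_natCast]
  have hc : ((2 * s + 2 * t + 2).choose (m + 1) : MvPolynomial (Fin s ⊕ Fin t) ℤ)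
      = ((2 * s + 2 * t + 1).choose (m + 1) : MvPolynomial (Fin s ⊕ Fin t) ℤ)
        + ((2 * s + 2 * t + 1).choose m : MvPolynomial (Fin s ⊕ Fin t) ℤ) := by
    rw [show 2 * s + 2 * t + 2 = (2 * s + 2 * t + 1) + 1 by omega,
      Nat.choose_succ_succ (n := 2 * s + 2 * t + 1) (k := m)]
    push_cast
    ring
  rw [hc, show m + 1 - 1 = m from rfl]
  have : QG s t (2 * s + 2 * t + 1) (2 * s + 1) (m + 1)
        + QG s t (2 * s + 2 * t + 1) (2 * s + 1) m
        - (((2 * s + 2 * t + 1).choose (m + 1) : MvPolynomial (Fin s ⊕ Fin t) ℤ)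
          + ((2 * s + 2 * t + 1).choose m : MvPolynomial (Fin s ⊕ Fin t) ℤ))
      = (QG s t (2 * s + 2 * t + 1) (2 * s + 1) (m + 1)
          - ((2 * s + 2 * t + 1).choose (m + 1) : MvPolynomial (Fin s ⊕ Fin t) ℤ))
        + (QG s t (2 * s + 2 * t + 1) (2 * s + 1) m
          - ((2 * s + 2 * t + 1).choose m : MvPolynomial (Fin s ⊕ Fin t) ℤ)) := by
    ring
  rw [this]
  exact Ideal.add_mem _ (genmem s t _ _ (by omega) (m + 1)) (genmem s t _ _ (by omega) m)

lemma bmap_gen (r : ℕ) (hr : 1 ≤ r) :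
    bmap s t (QG s t (2 * s + 2 * t + 1) (2 * s + 1) r
        - ((2 * s + 2 * t + 1).choose r : MvPolynomial (Fin s ⊕ Fin t) ℤ))
      ∈ KbarIdeal s t (2 * s + 2 * t + 2) (2 * s + 1) := by
  rw [map_sub, b_QG s t r hr, map_natCast]
  have key : (∑ j ∈ Finset.range (r + 1),
        (-1 : MvPolynomial (Fin s ⊕ Fin t) ℤ) ^ (r - j)
          * QG s t (2 * s + 2 * t + 2) (2 * s + 1) j)
        - (((2 * s + 2 * t + 1).choose r : MvPolynomial (Fin s ⊕ Fin t) ℤ))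
      = ∑ j ∈ Finset.range (r + 1),
          (-1 : MvPolynomial (Fin s ⊕ Fin t) ℤ) ^ (r - j)
            * (QG s t (2 * s + 2 * t + 2) (2 * s + 1) j
              - ((2 * s + 2 * t + 2).choose j : MvPolynomial (Fin s ⊕ Fin t) ℤ)) := by
    have h2 := altsum_choose (A := MvPolynomial (Fin s ⊕ Fin t) ℤ) (2 * s + 2 * t + 1) r
    rw [show 2 * s + 2 * t + 1 + 1 = 2 * s + 2 * t + 2 by omega] at h2
    rw [← h2, ← Finset.sum_sub_distrib]
    exact Finset.sum_congr rfl fun j _ => by ring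
  rw [key]
  exact Ideal.sum_mem _ fun j hj =>
    Ideal.mul_mem_left _ _ (genmem s t _ _ (by omega) j)

lemma amap_ideal {a : MvPolynomial (Fin s ⊕ Fin t) ℤ}
    (ha : a ∈ KbarIdeal s t (2 * s + 2 * t + 2) (2 * s + 1)) :
    amap s t a ∈ KbarIdeal s t (2 * s + 2 * t + 1) (2 * s + 1) := by
  have hle : KbarIdeal s t (2 * s + 2 * t + 2) (2 * s + 1)
      ≤ Ideal.comap (amap s t).toRingHom (KbarIdeal s t (2 * s + 2 * t + 1) (2 * s + 1)) := by
    rw [KbarIdeal, Ideal.span_le]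
    rintro x ⟨r, rfl⟩
    rw [SetLike.mem_coe, Ideal.mem_comap]
    exact amap_gen s t ((r : ℕ) + 1) (by omega)
  exact hle ha

lemma bmap_ideal {a : MvPolynomial (Fin s ⊕ Fin t) ℤ}
    (ha : a ∈ KbarIdeal s t (2 * s + 2 * t + 1) (2 * s + 1)) :
    bmap s t a ∈ KbarIdeal s t (2 * s + 2 * t + 2) (2 * s + 1) := by
  have hle : KbarIdeal s t (2 * s + 2 * t + 1) (2 * s + 1)
      ≤ Ideal.comap (bmap s t).toRingHom (KbarIdeal s t (2 * s + 2 * t + 2) (2 * s + 1)) := by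
    rw [KbarIdeal, Ideal.span_le]
    rintro x ⟨r, rfl⟩
    rw [SetLike.mem_coe, Ideal.mem_comap]
    exact bmap_gen s t ((r : ℕ) + 1) (by omega)
  exact hle ha

end Maps

/-! ### The quotient maps -/

noncomputable def phi (s t : ℕ) :
    Kbar s t (2 * s + 2 * t + 2) (2 * s + 1) →+* Kbar s t (2 * s + 2 * t + 1) (2 * s + 1) :=
  Ideal.Quotient.lift _
    ((Ideal.Quotient.mk (KbarIdeal s t (2 * s + 2 * t + 1) (2 * s + 1))).comp
      (amap s t).toRingHom)
    (fun a ha => by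
      rw [RingHom.comp_apply, Ideal.Quotient.eq_zero_iff_mem]
      exact amap_ideal s t ha)

noncomputable def psi (s t : ℕ) :
    Kbar s t (2 * s + 2 * t + 1) (2 * s + 1) →+* Kbar s t (2 * s + 2 * t + 2) (2 * s + 1) :=
  Ideal.Quotient.lift _
    ((Ideal.Quotient.mk (KbarIdeal s t (2 * s + 2 * t + 2) (2 * s + 1))).comp
      (bmap s t).toRingHom)
    (fun a ha => by
      rw [RingHom.comp_apply, Ideal.Quotient.eq_zero_iff_mem]
      exact bmap_ideal s t ha)

lemma phi_mk (s t : ℕ) (x : MvPolynomial (Fin s ⊕ Fin t) ℤ) :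
    phi s t (Ideal.Quotient.mk (KbarIdeal s t (2 * s + 2 * t + 2) (2 * s + 1)) x)
      = Ideal.Quotient.mk (KbarIdeal s t (2 * s + 2 * t + 1) (2 * s + 1)) (amap s t x) :=
  rfl

lemma psi_mk (s t : ℕ) (x : MvPolynomial (Fin s ⊕ Fin t) ℤ) :
    psi s t (Ideal.Quotient.mk (KbarIdeal s t (2 * s + 2 * t + 1) (2 * s + 1)) x)
      = Ideal.Quotient.mk (KbarIdeal s t (2 * s + 2 * t + 2) (2 * s + 1)) (bmap s t x) :=
  rfl

lemma psi_phi (s t : ℕ) : (psi s t).comp (phi s t) = RingHom.id _ := by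
  refine Ideal.Quotient.ringHom_ext (MvPolynomial.ringHom_ext (fun a => ?_) (fun v => ?_)) <;>
    simp [RingHom.comp_apply, phi_mk, psi_mk, ba]

lemma phi_psi (s t : ℕ) : (phi s t).comp (psi s t) = RingHom.id _ := by
  refine Ideal.Quotient.ringHom_ext (MvPolynomial.ringHom_ext (fun a => ?_) (fun v => ?_)) <;>
    simp [RingHom.comp_apply, phi_mk, psi_mk, ab]

/-- The assignment `α₀ : λ_p ↦ λ_p, μ_q ↦ μ_q + μ_{q-1}` defines a ring isomorphism
`K̄_{2s+2t+2, 2s+1} ≅ K̄_{2s+2t+1, 2s+1}`, with inverse `β₀ : λ_p ↦ λ_p,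
μ_q ↦ ∑_{j=0}^{q} (-1)^{q-j} μ_j`. -/
theorem alpha0_ring_iso (s t : ℕ) (hs : 1 ≤ s) (ht : 1 ≤ t) :
    ∃ e : Kbar s t (2 * s + 2 * t + 2) (2 * s + 1) ≃+*
        Kbar s t (2 * s + 2 * t + 1) (2 * s + 1),
      (∀ p : Fin s,
        e (Ideal.Quotient.mk (KbarIdeal s t (2 * s + 2 * t + 2) (2 * s + 1)) (X (Sum.inl p))) =
          Ideal.Quotient.mk (KbarIdeal s t (2 * s + 2 * t + 1) (2 * s + 1)) (X (Sum.inl p))) ∧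
      (∀ q : Fin t,
        e (Ideal.Quotient.mk (KbarIdeal s t (2 * s + 2 * t + 2) (2 * s + 1)) (X (Sum.inr q))) =
          Ideal.Quotient.mk (KbarIdeal s t (2 * s + 2 * t + 1) (2 * s + 1))
            (muG s t (2 * t) ((q : ℕ) + 1) + muG s t (2 * t) (q : ℕ))) ∧
      (∀ q : Fin t,
        e.symm
            (Ideal.Quotient.mk (KbarIdeal s t (2 * s + 2 * t + 1) (2 * s + 1)) (X (Sum.inr q))) =
          Ideal.Quotient.mk (KbarIdeal s t (2 * s + 2 * t + 2) (2 * s + 1))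
            (∑ j ∈ Finset.range ((q : ℕ) + 2),
              (-1 : MvPolynomial (Fin s ⊕ Fin t) ℤ) ^ ((q : ℕ) + 1 - j) *
                muG s t (2 * t + 1) j)) := by
  refine ⟨RingEquiv.ofRingHom (phi s t) (psi s t) (phi_psi s t) (psi_phi s t), ?_, ?_, ?_⟩
  · intro p
    rw [show ∀ x, (RingEquiv.ofRingHom (phi s t) (psi s t) (phi_psi s t) (psi_phi s t)) x
        = phi s t x from fun _ => rfl, phi_mk]
    congr 1
    simp [amap, aF]
  · intro q
    rw [show ∀ x, (RingEquiv.ofRingHom (phi s t) (psi s t) (phi_psi s t) (psi_phi s t)) x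
        = phi s t x from fun _ => rfl, phi_mk]
    congr 1
    exact amap_X_inr s t q
  · intro q
    rw [RingEquiv.ofRingHom_symm,
      show ∀ x, (RingEquiv.ofRingHom (psi s t) (phi s t) (psi_phi s t) (phi_psi s t)) x
        = psi s t x from fun _ => rfl, psi_mk]
    congr 1
    exact bmap_X_inr s t q
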